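/- arXiv:2107.11852 — 3 statements merged into one kernel-verified Lean document; each statement's English description precedes it below -/
import Mathlib

section
/- Let N ∈ ℕ, p ∈ [0,1] and R > 0. For each k ∈ {0,…,N} define the deterministic ergodic capacity C(k) = ∫_{[0,2π]^k} log₂(1 + |∑_{i=1}^k e^{iθ_i}|²) dU_k(θ), where U_k is the uniform probability measure on [0,2π]^k (so C(0) = 0). Let B₁,…,B_N be i.i.d. Bernoulli(p) random variables and φ̃₁,…,φ̃_N be i.i.d. uniform on [0,2π], with all 2N variables jointly independent, and define the random ergodic capacity C_erg = ∫_{[0,2π]^N} log₂(1 + |∑_{i=1}^N B_i e^{i(φ̃_i+θ_i)}|²) dU_N(θ). Then almost surely C_erg = C(∑_{i=1}^N B_i), and consequently the outage probability satisfies P(C_erg < R) = ∑_{k=0}^N (N choose k) p^k (1−p)^{N−k} · 1{C(k) < R}. -/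
open MeasureTheory ProbabilityTheory
open scoped ENNReal

/-- The uniform probability measure on `[0, 2π]`. -/
noncomputable def unifIcc : Measure ℝ :=
  (ENNReal.ofReal (2 * Real.pi))⁻¹ • (volume.restrict (Set.Icc 0 (2 * Real.pi)))

/-- The uniform probability measure on `[0, 2π]^k`. -/
noncomputable def unifPi (k : ℕ) : Measure (Fin k → ℝ) :=
  Measure.pi fun _ => unifIcc

/-- The Bernoulli(p) law on `ℕ` (mass `p` at `1`, mass `1 − p` at `0`). -/
noncomputable def bernoulliNat (p : ℝ) : Measure ℕ :=
  ENNReal.ofReal p • Measure.dirac 1 + ENNReal.ofReal (1 - p) • Measure.dirac 0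

/-- Index-dependent codomain for the joint family `(B₁, …, B_N, φ̃₁, …, φ̃_N)`. -/
def mixSpace (N : ℕ) : Fin N ⊕ Fin N → Type
  | .inl _ => ℕ
  | .inr _ => ℝ

/-- The family `(B₁, …, B_N, φ̃₁, …, φ̃_N)` as a single indexed family of random variables. -/
def mixVar {Ω : Type*} {N : ℕ} (B : Fin N → Ω → ℕ) (φ : Fin N → Ω → ℝ) :
    ∀ j : Fin N ⊕ Fin N, Ω → mixSpace N j
  | .inl i => B i
  | .inr i => φ i

/-- The measurable-space structure on the mixed codomains. -/
def mixMS (N : ℕ) : ∀ j : Fin N ⊕ Fin N, MeasurableSpace (mixSpace N j)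
  | .inl _ => inferInstanceAs (MeasurableSpace ℕ)
  | .inr _ => inferInstanceAs (MeasurableSpace ℝ)

/-- The deterministic ergodic capacity with `k` active links:
`C(k) = ∫_{[0,2π]^k} log₂(1 + |∑_{i=1}^k e^{iθ_i}|²) dU_k(θ)`. -/
noncomputable def ergCap (k : ℕ) : ℝ :=
  ∫ θ : Fin k → ℝ,
    Real.logb 2 (1 + ‖∑ i, Complex.exp ((θ i : ℂ) * Complex.I)‖ ^ 2) ∂(unifPi k)

/-- The random ergodic capacity under phase hopping:
`C_erg(ω) = ∫_{[0,2π]^N} log₂(1 + |∑_{i=1}^N B_i(ω) e^{i(φ̃_i(ω) + θ_i)}|²) dU_N(θ)`. -/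
noncomputable def ergCapRand {Ω : Type*} {N : ℕ} (B : Fin N → Ω → ℕ) (φ : Fin N → Ω → ℝ)
    (ω : Ω) : ℝ :=
  ∫ θ : Fin N → ℝ,
    Real.logb 2 (1 + ‖
      (∑ i, (B i ω : ℂ) * Complex.exp ((↑(φ i ω + θ i) : ℂ) * Complex.I))‖ ^ 2) ∂(unifPi N)

/-!
Phase hopping makes the cascaded phases irrelevant: `θ_i ↦ φ̃_i + θ_i` is a translation of the
circle and the uniform law is its Haar measure, so `φ̃` drops out of the integral. A blocked link
(`B_i = 0`) contributes nothing to the channel gain, so integrating out its phase leaves the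
capacity of the `∑ B_i` unblocked links, which by symmetry is `C(∑ B_i)`. Hence `C_erg` is a
function of `K = ∑ B_i`; the `B_i` being i.i.d. Bernoulli(p), `K` is binomial, and the outage
probability is the binomial mass of `{k | C(k) < R}`.
-/

open Real

section Capacity

instance : Fact (0 < 2 * π) := ⟨two_pi_pos⟩

instance : IsProbabilityMeasure unifIcc := by
  constructor
  have h : ENNReal.ofReal (2 * π) ≠ 0 := by simp [pi_pos]
  rw [unifIcc, Measure.smul_apply, Measure.restrict_apply_univ, Real.volume_Icc, sub_zero,
    smul_eq_mul, ENNReal.inv_mul_cancel h ENNReal.ofReal_ne_top]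

lemma measurePreserving_coe_unifIcc :
    MeasurePreserving ((↑) : ℝ → AddCircle (2 * π)) unifIcc AddCircle.haarAddCircle := by
  have h := AddCircle.measurePreserving_mk (2 * π) 0
  rw [zero_add] at h
  refine ⟨h.measurable, ?_⟩
  rw [unifIcc, Measure.map_smul, Measure.restrict_congr_set Ioc_ae_eq_Icc.symm, h.map_eq,
    AddCircle.volume_eq_smul_haarAddCircle, smul_smul,
    ENNReal.inv_mul_cancel (by simp [pi_pos]) ENNReal.ofReal_ne_top, one_smul]

lemma AddCircle.toCircle_coe_two_pi (x : ℝ) :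
    ((AddCircle.toCircle (x : AddCircle (2 * π)) : Circle) : ℂ) = Complex.exp (x * Complex.I) := by
  rw [AddCircle.toCircle_apply_mk, div_self two_pi_pos.ne', one_mul, Circle.coe_exp]

lemma Nat.cast_eq_ite_of_le_one {R : Type*} [AddMonoidWithOne R] {n : ℕ} (hn : n ≤ 1) :
    (n : R) = if n = 1 then 1 else 0 := by
  interval_cases n <;> simp

variable {ι : Type*} [Fintype ι] {E : Type*} [NormedAddCommGroup E] [NormedSpace ℝ E]

lemma integral_pi_unifIcc_exp_add (c : ι → ℝ) {f : (ι → ℂ) → E} (hf : StronglyMeasurable f) :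
    ∫ θ, f (fun i => Complex.exp (↑(c i + θ i) * Complex.I)) ∂Measure.pi (fun _ : ι => unifIcc) =
      ∫ θ, f (fun i => Complex.exp (θ i * Complex.I)) ∂Measure.pi (fun _ : ι => unifIcc) := by
  set F : (ι → AddCircle (2 * π)) → E := fun x => f fun i => (AddCircle.toCircle (x i) : ℂ)
  have hF : StronglyMeasurable F := hf.comp_measurable <| measurable_pi_lambda _ fun i =>
    (continuous_subtype_val.comp AddCircle.continuous_toCircle).measurable.comp
      (measurable_pi_apply i)
  have hq := measurePreserving_pi _ _ fun _ : ι => measurePreserving_coe_unifIcc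
  calc _ = ∫ θ, F ((fun i => (c i : AddCircle (2 * π))) + fun i => (θ i : AddCircle (2 * π)))
          ∂Measure.pi (fun _ : ι => unifIcc) := by
        simp only [F, Pi.add_apply, ← AddCircle.coe_add, AddCircle.toCircle_coe_two_pi]
    _ = ∫ x, F ((fun i => (c i : AddCircle (2 * π))) + x)
          ∂Measure.pi (fun _ : ι => AddCircle.haarAddCircle) := by
        rw [← hq.map_eq, integral_map hq.measurable.aemeasurable]
        exact (hF.comp_measurable (measurable_const_add _)).aestronglyMeasurable
    _ = ∫ x, F x ∂Measure.pi (fun _ : ι => AddCircle.haarAddCircle) := integral_add_left_eq_self F _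
    _ = _ := by
        rw [← hq.map_eq, integral_map hq.measurable.aemeasurable hF.aestronglyMeasurable]
        simp only [F, AddCircle.toCircle_coe_two_pi]

lemma integral_pi_comp_subtype {α : ι → Type*} [∀ i, MeasurableSpace (α i)]
    (μ : ∀ i, Measure (α i)) [∀ i, IsProbabilityMeasure (μ i)] (p : ι → Prop) [DecidablePred p]
    (f : (∀ i : Subtype p, α i) → E) :
    ∫ x, f (fun i => x i) ∂Measure.pi μ = ∫ y, f y ∂Measure.pi fun i : Subtype p => μ i := by
  refine ((measurePreserving_piEquivPiSubtypeProd μ p).integral_comp' fun z => f z.1).trans ?_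
  simp [integral_fun_fst]

lemma integral_pi_sum_comp_equiv {κ α M : Type*} [Fintype κ] [MeasurableSpace α]
    [AddCommMonoid M] (e : κ ≃ ι) (μ : Measure α) [SigmaFinite μ] (g : α → M) (f : M → E) :
    ∫ θ, f (∑ k, g (θ k)) ∂Measure.pi (fun _ : κ => μ) =
      ∫ θ, f (∑ i, g (θ i)) ∂Measure.pi (fun _ : ι => μ) := by
  rw [← (measurePreserving_piCongrLeft (fun _ => μ) e).integral_comp']
  congr! 3 with θ
  rw [← e.sum_comp]
  simp [MeasurableEquiv.coe_piCongrLeft, Equiv.piCongrLeft_apply_apply]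

lemma ergCap_card_eq_integral_pi :
    ergCap (Fintype.card ι) = ∫ θ, logb 2 (1 + ‖∑ i, Complex.exp (θ i * Complex.I)‖ ^ 2)
      ∂Measure.pi (fun _ : ι => unifIcc) :=
  integral_pi_sum_comp_equiv (Fintype.equivFin ι).symm unifIcc
    (fun t => Complex.exp (t * Complex.I)) (fun z => logb 2 (1 + ‖z‖ ^ 2))

lemma integral_logb_shifted_binary_sum_eq_ergCap (b : ι → ℕ) (hb : ∀ i, b i ≤ 1) (c : ι → ℝ) :
    ∫ θ, logb 2 (1 + ‖∑ i, (b i : ℂ) * Complex.exp (↑(c i + θ i) * Complex.I)‖ ^ 2)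
      ∂Measure.pi (fun _ : ι => unifIcc) = ergCap (∑ i, b i) := by
  classical
  have hsum (z : ι → ℂ) : ∑ i, (b i : ℂ) * z i = ∑ i : {i // b i = 1}, z i := by
    simp_rw [Nat.cast_eq_ite_of_le_one (hb _), ite_mul, one_mul, zero_mul]
    rw [Finset.sum_ite, Finset.sum_const_zero, add_zero, Finset.sum_subtype]
    simp
  have hcard : ∑ i, b i = Fintype.card {i // b i = 1} := by
    have h := hsum fun _ => 1
    simp only [mul_one, Finset.sum_const, Finset.card_univ, nsmul_eq_mul] at h
    exact_mod_cast h
  have hf : StronglyMeasurable fun z : ι → ℂ => logb 2 (1 + ‖∑ i, (b i : ℂ) * z i‖ ^ 2) :=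
    Measurable.stronglyMeasurable (by unfold logb; fun_prop)
  rw [integral_pi_unifIcc_exp_add c hf, hcard, ergCap_card_eq_integral_pi]
  simp only [hsum]
  exact integral_pi_comp_subtype (fun _ => unifIcc) (fun i => b i = 1)
    (fun θ => logb 2 (1 + ‖∑ i, Complex.exp (θ i * Complex.I)‖ ^ 2))

end Capacity

section Binomial

noncomputable def binomialNat (n : ℕ) (p : ℝ) : Measure ℕ :=
  ∑ k ∈ Finset.range (n + 1),
    ((n.choose k : ℝ≥0∞) * ENNReal.ofReal p ^ k * ENNReal.ofReal (1 - p) ^ (n - k)) •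
      Measure.dirac k

lemma binomialNat_singleton (n : ℕ) (p : ℝ) (k : ℕ) :
    binomialNat n p {k} =
      (n.choose k : ℝ≥0∞) * ENNReal.ofReal p ^ k * ENNReal.ofReal (1 - p) ^ (n - k) := by
  by_cases hk : k ≤ n
  · simp [binomialNat, Set.indicator_apply, Nat.lt_succ_of_le hk]
  · simp [binomialNat, Set.indicator_apply, Nat.choose_eq_zero_of_lt (not_le.1 hk)]

lemma binomialNat_setOf_toReal {n : ℕ} {p : ℝ} (hp0 : 0 ≤ p) (hp1 : p ≤ 1) (q : ℕ → Prop)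
    [DecidablePred q] :
    (binomialNat n p {k | q k}).toReal =
      ∑ k ∈ Finset.range (n + 1), (n.choose k : ℝ) * p ^ k * (1 - p) ^ (n - k) *
        (if q k then 1 else 0) := by
  rw [binomialNat, Measure.coe_finsetSum, Finset.sum_apply,
    ENNReal.toReal_sum fun _ _ => by
      simpa only [Measure.smul_apply, smul_eq_mul] using
        ENNReal.mul_ne_top (by simp [ENNReal.mul_eq_top]) (measure_ne_top _ _)]
  refine Finset.sum_congr rfl fun k _ => ?_
  split_ifs with hk <;>
    simp [hk, ENNReal.toReal_ofReal hp0, ENNReal.toReal_ofReal (sub_nonneg.2 hp1)]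

instance (p : ℝ) : IsFiniteMeasure (bernoulliNat p) :=
  ⟨by simp [bernoulliNat, ENNReal.add_lt_top]⟩

lemma bernoulliNat_ae_le_one (p : ℝ) : ∀ᵐ n ∂bernoulliNat p, n ≤ 1 := by
  simp [ae_iff, bernoulliNat]

lemma Finset.indicator_one_injective {ι : Type*} :
    Function.Injective fun s : Finset ι => (s : Set ι).indicator (1 : ι → ℕ) :=
  fun _ _ h => Finset.coe_inj.1 (Set.indicator_one_inj ℕ h)

variable {ι : Type*} [Fintype ι]

lemma exists_indicator_eq_of_le_one {x : ι → ℕ} (hx : ∀ i, x i ≤ 1) :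
    ∃ s : Finset ι, (s : Set ι).indicator 1 = x := by
  classical
  refine ⟨Finset.univ.filter (x · = 1), funext fun i => ?_⟩
  have := hx i
  interval_cases h : x i <;> simp [h]

lemma Finset.sum_indicator_one_eq_card (s : Finset ι) :
    ∑ i, (s : Set ι).indicator (1 : ι → ℕ) i = s.card := by
  classical
  simp [Set.indicator_apply]

lemma pi_bernoulliNat_indicator (p : ℝ) (s : Finset ι) :
    Measure.pi (fun _ : ι => bernoulliNat p) {(s : Set ι).indicator 1} =
      ENNReal.ofReal p ^ s.card * ENNReal.ofReal (1 - p) ^ (Fintype.card ι - s.card) := by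
  classical
  have h (i : ι) : bernoulliNat p {(s : Set ι).indicator 1 i} =
      if i ∈ s then ENNReal.ofReal p else ENNReal.ofReal (1 - p) := by
    by_cases hi : i ∈ s <;> simp [bernoulliNat, hi]
  simp only [Measure.pi_singleton, h, Finset.prod_ite, Finset.prod_const]
  rw [← Finset.card_compl]
  congr 3 <;> ext <;> simp

lemma map_sum_pi_bernoulliNat (p : ℝ) :
    (Measure.pi fun _ : ι => bernoulliNat p).map (fun x => ∑ i, x i) =
      binomialNat (Fintype.card ι) p := by
  refine Measure.ext_of_singleton fun k => ?_
  rw [binomialNat_singleton, Measure.map_apply (by fun_prop) (measurableSet_singleton k)]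
  have h01 : ∀ᵐ x ∂Measure.pi (fun _ : ι => bernoulliNat p), ∀ i, x i ≤ 1 :=
    ae_all_iff.2 fun i =>
      (Measure.tendsto_eval_ae_ae (μ := fun _ : ι => bernoulliNat p) (i := i)).eventually
        (bernoulliNat_ae_le_one p)
  have hset : (fun x : ι → ℕ => ∑ i, x i) ⁻¹' {k} =ᵐ[Measure.pi fun _ : ι => bernoulliNat p]
      ⋃ s ∈ (Finset.univ : Finset ι).powersetCard k, {(s : Set ι).indicator 1} := by
    refine Filter.eventuallyEq_set.2 (h01.mono fun x hx => ?_)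
    obtain ⟨t, rfl⟩ := exists_indicator_eq_of_le_one hx
    simp [Finset.sum_indicator_one_eq_card, Finset.indicator_one_injective.eq_iff, eq_comm]
  rw [measure_congr hset, measure_biUnion_finset]
  · rw [Finset.sum_congr rfl fun s hs => by
      rw [pi_bernoulliNat_indicator, (Finset.mem_powersetCard.1 hs).2]]
    simp [mul_assoc]
  · exact fun s _ t _ hst => Set.disjoint_singleton.2 (Finset.indicator_one_injective.ne hst)
  · exact fun _ _ => measurableSet_singleton _

lemma map_sum_eq_binomialNat {Ω : Type*} [MeasurableSpace Ω] {P : Measure Ω} {p : ℝ}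
    {B : ι → Ω → ℕ} (hB : ∀ i, Measurable (B i)) (hlaw : ∀ i, P.map (B i) = bernoulliNat p)
    (hindep : iIndepFun B P) :
    P.map (fun ω => ∑ i, B i ω) = binomialNat (Fintype.card ι) p := by
  have hvec : P.map (fun ω i => B i ω) = Measure.pi fun _ : ι => bernoulliNat p := by
    simp [hindep.map_fun_eq_pi_map fun i => (hB i).aemeasurable, hlaw]
  rw [← map_sum_pi_bernoulliNat, ← hvec, Measure.map_map (by fun_prop) (by fun_prop)]
  rfl

end Binomial

theorem stmt0_general {Ω : Type*} [MeasurableSpace Ω] (P : Measure Ω)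
    (N : ℕ) (p : ℝ) (hp0 : 0 ≤ p) (hp1 : p ≤ 1) (R : ℝ)
    (B : Fin N → Ω → ℕ) (φ : Fin N → Ω → ℝ)
    (hBmeas : ∀ i, Measurable (B i))
    (hBlaw : ∀ i, Measure.map (B i) P = bernoulliNat p)
    (hindep : @iIndepFun _ _ _ _ (mixMS N) (mixVar B φ) P) :
    (∀ᵐ ω ∂P, ergCapRand B φ ω = ergCap (∑ i, B i ω)) ∧
    (P {ω | ergCapRand B φ ω < R}).toReal =
      ∑ k ∈ Finset.range (N + 1),
        (N.choose k : ℝ) * p ^ k * (1 - p) ^ (N - k) * (if ergCap k < R then 1 else 0) := by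
  have hbinary : ∀ᵐ ω ∂P, ∀ i, B i ω ≤ 1 := ae_all_iff.2 fun i =>
    ae_of_ae_map (hBmeas i).aemeasurable (hBlaw i ▸ bernoulliNat_ae_le_one p)
  have hcap : ∀ᵐ ω ∂P, ergCapRand B φ ω = ergCap (∑ i, B i ω) :=
    hbinary.mono fun ω hω => integral_logb_shifted_binary_sum_eq_ergCap _ hω _
  have hindB : iIndepFun B P := hindep.precomp (g := Sum.inl) Sum.inl_injective
  have hsum : P.map (fun ω => ∑ i, B i ω) = binomialNat N p := by
    simpa using map_sum_eq_binomialNat hBmeas hBlaw hindB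
  refine ⟨hcap, ?_⟩
  calc (P {ω | ergCapRand B φ ω < R}).toReal
      = (P ((fun ω => ∑ i, B i ω) ⁻¹' {k | ergCap k < R})).toReal := by
        congr 1
        exact measure_congr (Filter.eventuallyEq_set.2 (hcap.mono fun ω hω => by simp [hω]))
    _ = _ := by
        rw [← Measure.map_apply (by fun_prop) (by measurability), hsum,
          binomialNat_setOf_toReal hp0 hp1]

/-- with i.i.d. Bernoulli(p) gains `B_i` and i.i.d. uniform phases `φ̃_i`, all
jointly independent, the random ergodic capacity `C_erg` is a.s. equal to `C(∑ i B_i)`, and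
`P(C_erg < R) = ∑_{k=0}^N (N choose k) p^k (1−p)^{N−k} 1{C(k) < R}`. -/
theorem stmt0 {Ω : Type*} [MeasurableSpace Ω] (P : Measure Ω) [IsProbabilityMeasure P]
    (N : ℕ) (p : ℝ) (hp0 : 0 ≤ p) (hp1 : p ≤ 1) (R : ℝ) (hR : 0 < R)
    (B : Fin N → Ω → ℕ) (φ : Fin N → Ω → ℝ)
    (hBmeas : ∀ i, Measurable (B i)) (hφmeas : ∀ i, Measurable (φ i))
    (hBlaw : ∀ i, Measure.map (B i) P = bernoulliNat p)
    (hφlaw : ∀ i, Measure.map (φ i) P = unifIcc)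
    (hindep : @iIndepFun _ _ _ _ (mixMS N) (mixVar B φ) P) :
    (∀ᵐ ω ∂P, ergCapRand B φ ω = ergCap (∑ i, B i ω)) ∧
    (P {ω | ergCapRand B φ ω < R}).toReal =
      ∑ k ∈ Finset.range (N + 1),
        (N.choose k : ℝ) * p ^ k * (1 - p) ^ (N - k) * (if ergCap k < R then 1 else 0) :=
  stmt0_general P N p hp0 hp1 R B φ hBmeas hBlaw hindep
end

section
/- For every σ > 0, ∫_0^∞ log(1+s²) · (s/σ²) · exp(−s²/(2σ²)) ds = exp(1/(2σ²)) · ∫_{1/(2σ²)}^∞ (e^{−t}/t) dt, and both integrals are finite. Equivalently, the ergodic capacity E[log₂(1+S²)] of a channel whose magnitude S is Rayleigh(σ)-distributed equals −(1/log 2) · exp(1/(2σ²)) · Ei(−1/(2σ²)). -/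
/-!
With `a = 1 / (2σ²)` the Rayleigh density is `2 a s e^{-a s²}`, the derivative of
`-e^{-a s²}`. Integrating by parts (the boundary terms vanish because `log 1 = 0` and
`log (1 + s²) e^{-a s²} → 0`) turns the left-hand side into `∫₀^∞ 2s/(1+s²) e^{-a s²} ds`,
and the substitution `t = a (1 + s²)` turns `∫_a^∞ e^{-t}/t dt` into `e^{-a}` times that integral.
The `log₂` version is the same identity divided by `log 2`.
-/

open MeasureTheory Real Filter Set Topology

lemma log_one_add_sq_le_sq (x : ℝ) : log (1 + x ^ 2) ≤ x ^ 2 := by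
  linarith [log_le_sub_one_of_pos (by positivity : (0 : ℝ) < 1 + x ^ 2)]

lemma integrableOn_exp_neg_div_self_Ioi {a : ℝ} (ha : 0 < a) :
    IntegrableOn (fun t : ℝ => exp (-t) / t) (Ioi a) := by
  refine ((exp_neg_integrableOn_Ioi a one_pos).const_mul a⁻¹).mono'
    (by fun_prop : Measurable fun t : ℝ => exp (-t) / t).aestronglyMeasurable ?_
  filter_upwards [ae_restrict_mem measurableSet_Ioi] with t (ht : a < t)
  have ht₀ : 0 < t := ha.trans ht
  rw [norm_of_nonneg (by positivity), neg_one_mul, inv_mul_eq_div]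
  gcongr

lemma hasDerivAt_neg_log_one_add_sq_mul_exp (a x : ℝ) :
    HasDerivAt (fun s : ℝ => -(log (1 + s ^ 2) * exp (-a * s ^ 2)))
      (log (1 + x ^ 2) * (2 * a * x) * exp (-a * x ^ 2)
        - 2 * x / (1 + x ^ 2) * exp (-a * x ^ 2)) x := by
  have hlog : HasDerivAt (fun s : ℝ => log (1 + s ^ 2)) (2 * x / (1 + x ^ 2)) x :=
    (((hasDerivAt_pow 2 x).const_add 1).log (by positivity)).congr_deriv (by norm_num)
  have hexp : HasDerivAt (fun s : ℝ => exp (-a * s ^ 2)) (exp (-a * x ^ 2) * (-a * (2 * x))) x :=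
    ((hasDerivAt_pow 2 x).const_mul (-a)).exp.congr_deriv (by norm_num)
  exact (hlog.mul hexp).neg.congr_deriv (by ring)

section

variable {a : ℝ} (ha : 0 < a)
include ha

lemma integrable_two_mul_div_one_add_sq_mul_exp :
    Integrable fun x : ℝ => 2 * x / (1 + x ^ 2) * exp (-a * x ^ 2) := by
  refine (integrable_exp_neg_mul_sq ha).mono'
    (by fun_prop (disch := intro x; positivity) :
      Continuous fun x : ℝ => 2 * x / (1 + x ^ 2) * exp (-a * x ^ 2)).aestronglyMeasurable
    (ae_of_all _ fun x => ?_)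
  have hratio : ‖2 * x / (1 + x ^ 2)‖ ≤ 1 := by
    rw [norm_div, norm_of_nonneg (by positivity : (0 : ℝ) ≤ 1 + x ^ 2),
      div_le_one (by positivity), norm_eq_abs, abs_le]
    constructor <;> nlinarith [sq_nonneg (x + 1), sq_nonneg (x - 1)]
  rw [norm_mul, norm_of_nonneg (exp_pos _).le]
  exact mul_le_of_le_one_left (exp_pos _).le hratio

lemma integrableOn_log_one_add_sq_mul_exp :
    IntegrableOn (fun s : ℝ => log (1 + s ^ 2) * (2 * a * s) * exp (-a * s ^ 2)) (Ioi 0) := by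
  refine ((integrableOn_rpow_mul_exp_neg_mul_sq ha (by norm_num : (-1 : ℝ) < 3)).const_mul
    (2 * a)).mono'
    (by fun_prop (disch := intro x; positivity) : Continuous fun s : ℝ =>
      log (1 + s ^ 2) * (2 * a * s) * exp (-a * s ^ 2)).aestronglyMeasurable ?_
  filter_upwards [ae_restrict_mem measurableSet_Ioi] with s (hs : 0 < s)
  have hlog : 0 ≤ log (1 + s ^ 2) := log_nonneg (by nlinarith)
  rw [norm_of_nonneg (by positivity), show (3 : ℝ) = (3 : ℕ) by norm_num, rpow_natCast]
  calc log (1 + s ^ 2) * (2 * a * s) * exp (-a * s ^ 2)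
      ≤ s ^ 2 * (2 * a * s) * exp (-a * s ^ 2) := by gcongr; exact log_one_add_sq_le_sq s
    _ = 2 * a * (s ^ 3 * exp (-a * s ^ 2)) := by ring

lemma tendsto_log_one_add_sq_mul_exp_atTop :
    Tendsto (fun s : ℝ => log (1 + s ^ 2) * exp (-a * s ^ 2)) atTop (𝓝 0) := by
  have hsq : Tendsto (fun s : ℝ => s ^ 2 * exp (-a * s ^ 2)) atTop (𝓝 0) := by
    have h := ((tendsto_pow_mul_exp_neg_atTop_nhds_zero 1).comp
      ((tendsto_pow_atTop two_ne_zero).const_mul_atTop ha)).const_mul a⁻¹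
    rw [mul_zero] at h
    refine h.congr fun s => ?_
    simp only [Function.comp_apply, pow_one, neg_mul]
    field_simp
  refine squeeze_zero (fun s => mul_nonneg (log_nonneg (by nlinarith)) (exp_pos _).le)
    (fun s => ?_) hsq
  gcongr
  exact log_one_add_sq_le_sq s

lemma integral_log_one_add_sq_mul_exp_eq_integral_div :
    ∫ s in Ioi 0, log (1 + s ^ 2) * (2 * a * s) * exp (-a * s ^ 2) =
      ∫ s in Ioi 0, 2 * s / (1 + s ^ 2) * exp (-a * s ^ 2) := by
  have hf := integrableOn_log_one_add_sq_mul_exp ha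
  have hg := (integrable_two_mul_div_one_add_sq_mul_exp ha).integrableOn (s := Ioi 0)
  have hftc := integral_Ioi_of_hasDerivAt_of_tendsto'
    (fun x _ => hasDerivAt_neg_log_one_add_sq_mul_exp a x) (hf.sub hg)
    (tendsto_log_one_add_sq_mul_exp_atTop ha).neg
  have hF₀ : -(log (1 + (0 : ℝ) ^ 2) * exp (-a * 0 ^ 2)) = 0 := by simp
  rwa [integral_sub hf hg, neg_zero, hF₀, sub_zero, sub_eq_zero] at hftc

lemma integral_exp_neg_div_self_Ioi :
    ∫ t in Ioi a, exp (-t) / t =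
      exp (-a) * ∫ x in Ioi 0, 2 * x / (1 + x ^ 2) * exp (-a * x ^ 2) := by
  set φ : ℝ → ℝ := fun x => a * (1 + x ^ 2)
  have hφ_pos : ∀ x, 0 < φ x := fun x => by positivity
  have hφ_ge : ∀ x, a ≤ φ x := fun x => by nlinarith [sq_nonneg x]
  have hsubst : ∀ x, exp (-φ x) / φ x * (2 * a * x) =
      exp (-a) * (2 * x / (1 + x ^ 2) * exp (-a * x ^ 2)) := fun x => by
    simp only [φ]
    rw [show -φ x = -a + -a * x ^ 2 by ring, exp_add]
    field_simp
  have hφ_deriv (x : ℝ) : HasDerivAt φ (2 * a * x) x :=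
    (((hasDerivAt_pow 2 x).const_add 1).const_mul a).congr_deriv (by norm_num; ring)
  have hcov := integral_comp_mul_deriv_Ioi (g := fun t => exp (-t) / t) (a := 0)
    (by fun_prop : Continuous φ).continuousOn
    ((tendsto_atTop_add_const_left _ 1 (tendsto_pow_atTop two_ne_zero)).const_mul_atTop ha)
    (fun x _ => (hφ_deriv x).hasDerivWithinAt)
    (ContinuousOn.div (by fun_prop) continuousOn_id
      (by rintro _ ⟨x, -, rfl⟩; exact (hφ_pos x).ne'))
    ((Iff.mpr integrableOn_Ici_iff_integrableOn_Ioi (integrableOn_exp_neg_div_self_Ioi ha)).mono_set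
      (by rintro _ ⟨x, -, rfl⟩; exact hφ_ge x))
    (((integrable_two_mul_div_one_add_sq_mul_exp ha).const_mul (exp (-a))).integrableOn.congr_fun
      (fun x _ => (hsubst x).symm) measurableSet_Ici)
  simp only [Function.comp_def, hsubst, φ] at hcov
  rw [zero_pow two_ne_zero, add_zero, mul_one, integral_const_mul] at hcov
  exact hcov.symm

theorem integral_log_one_add_sq_mul_exp :
    ∫ s in Ioi 0, log (1 + s ^ 2) * (2 * a * s) * exp (-a * s ^ 2) =
      exp a * ∫ t in Ioi a, exp (-t) / t := by
  rw [integral_log_one_add_sq_mul_exp_eq_integral_div ha, integral_exp_neg_div_self_Ioi ha,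
    ← mul_assoc, ← exp_add, add_neg_cancel, exp_zero, one_mul]

end

/-- for every `σ > 0`,
`∫_0^∞ log(1+s²) (s/σ²) exp(−s²/(2σ²)) ds = exp(1/(2σ²)) ∫_{1/(2σ²)}^∞ e^{−t}/t dt`,
both integrals being finite; equivalently, the ergodic capacity `E[log₂(1+S²)]` of a
Rayleigh(σ) channel equals `(1/log 2) · exp(1/(2σ²)) ∫_{1/(2σ²)}^∞ e^{−t}/t dt`
(`= −(1/log 2) e^{1/(2σ²)} Ei(−1/(2σ²))`). -/
theorem stmt7 (σ : ℝ) (hσ : 0 < σ) :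
    IntegrableOn (fun s : ℝ =>
      Real.log (1 + s ^ 2) * (s / σ ^ 2) * Real.exp (-s ^ 2 / (2 * σ ^ 2))) (Set.Ioi 0) ∧
    IntegrableOn (fun t : ℝ => Real.exp (-t) / t) (Set.Ioi (1 / (2 * σ ^ 2))) ∧
    ((∫ s in Set.Ioi (0 : ℝ),
        Real.log (1 + s ^ 2) * (s / σ ^ 2) * Real.exp (-s ^ 2 / (2 * σ ^ 2))) =
      Real.exp (1 / (2 * σ ^ 2)) * ∫ t in Set.Ioi (1 / (2 * σ ^ 2)), Real.exp (-t) / t) ∧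
    ((∫ s in Set.Ioi (0 : ℝ),
        Real.logb 2 (1 + s ^ 2) * ((s / σ ^ 2) * Real.exp (-s ^ 2 / (2 * σ ^ 2)))) =
      (1 / Real.log 2) * Real.exp (1 / (2 * σ ^ 2)) *
        ∫ t in Set.Ioi (1 / (2 * σ ^ 2)), Real.exp (-t) / t) := by
  set a := 1 / (2 * σ ^ 2) with ha_def
  have ha : 0 < a := by positivity
  have hdensity (s : ℝ) :
      s / σ ^ 2 * exp (-s ^ 2 / (2 * σ ^ 2)) = 2 * a * s * exp (-a * s ^ 2) := by
    rw [ha_def]; field_simp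
  have hlog : (fun s : ℝ => log (1 + s ^ 2) * (s / σ ^ 2) * exp (-s ^ 2 / (2 * σ ^ 2))) =
      fun s => log (1 + s ^ 2) * (2 * a * s) * exp (-a * s ^ 2) := by
    funext s; rw [mul_assoc, hdensity, ← mul_assoc]
  have hlogb : (fun s : ℝ => logb 2 (1 + s ^ 2) * (s / σ ^ 2 * exp (-s ^ 2 / (2 * σ ^ 2)))) =
      fun s => 1 / log 2 * (log (1 + s ^ 2) * (2 * a * s) * exp (-a * s ^ 2)) := by
    funext s; rw [hdensity, logb]; ring
  rw [hlog, hlogb, integral_const_mul, integral_log_one_add_sq_mul_exp ha, mul_assoc]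
  exact ⟨integrableOn_log_one_add_sq_mul_exp ha, integrableOn_exp_neg_div_self_Ioi ha, rfl, rfl⟩
end

section
/- Define E : (0,∞) → ℝ by E(x) = e^x · ∫_x^∞ (e^{−t}/t) dt. Then E(x) is finite for every x > 0 and E is strictly monotonically decreasing on (0,∞); i.e., for all 0 < x < y, E(y) < E(x). -/
/-! Substituting `t = u + x` gives `E(x) = ∫₀^∞ e^{-u} / (u + x) du`: the dependence on `x` moves
from the domain into the integrand, which is integrable (dominated by `e^{-u} / x`) and strictly
decreasing in `x` pointwise, so its integral over the half-line decreases strictly. -/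

open MeasureTheory

/-- `E(x) = e^x ∫_x^∞ e^{−t}/t dt = −e^x Ei(−x)` for `x > 0`. -/
noncomputable def Efun (x : ℝ) : ℝ := Real.exp x * ∫ t in Set.Ioi x, Real.exp (-t) / t

lemma integrableOn_exp_neg_div_add_Ioi {a c : ℝ} (hac : 0 < a + c) :
    IntegrableOn (fun t : ℝ => Real.exp (-t) / (t + c)) (Set.Ioi a) := by
  refine Integrable.mono' ((exp_neg_integrableOn_Ioi a one_pos).div_const (a + c)) ?_ ?_
  · exact ((Real.measurable_exp.comp measurable_neg).div
      (measurable_id.add_const c)).aestronglyMeasurable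
  · filter_upwards [ae_restrict_mem measurableSet_Ioi] with t (ht : a < t)
    have htc : 0 < t + c := by linarith
    rw [Real.norm_eq_abs, abs_of_pos (by positivity), neg_one_mul]
    gcongr

lemma integrableOn_exp_neg_div_Ioi {a : ℝ} (ha : 0 < a) :
    IntegrableOn (fun t : ℝ => Real.exp (-t) / t) (Set.Ioi a) := by
  simpa using integrableOn_exp_neg_div_add_Ioi (c := 0) (by simpa using ha)

lemma setIntegral_lt_setIntegral_of_forall_lt {X : Type*} [MeasurableSpace X] {μ : Measure X}
    {s : Set X} {f g : X → ℝ} (hs : MeasurableSet s) (hμs : μ s ≠ 0)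
    (hf : IntegrableOn f s μ) (hg : IntegrableOn g s μ) (hlt : ∀ x ∈ s, f x < g x) :
    ∫ x in s, f x ∂μ < ∫ x in s, g x ∂μ := by
  rw [← sub_pos, ← integral_sub hg hf]
  have hpos : ∀ x ∈ s, 0 < g x - f x := fun x hx => sub_pos.mpr (hlt x hx)
  have hnn : 0 ≤ᵐ[μ.restrict s] fun x => g x - f x := by
    filter_upwards [ae_restrict_mem hs] with x hx using (hpos x hx).le
  rw [setIntegral_pos_iff_support_of_nonneg_ae hnn (hg.sub hf),
    Set.inter_eq_right.mpr fun x hx => Function.mem_support.mpr (hpos x hx).ne']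
  exact pos_iff_ne_zero.mpr hμs

lemma Efun_eq_integral_Ioi_zero (x : ℝ) :
    Efun x = ∫ u in Set.Ioi 0, Real.exp (-u) / (u + x) := by
  have hpre : (fun u : ℝ => u + x) ⁻¹' Set.Ioi x = Set.Ioi 0 := by
    ext u; simp
  have hshift := (measurePreserving_add_right volume x).setIntegral_preimage_emb
    (Homeomorph.addRight x).measurableEmbedding (fun t => Real.exp (-t) / t) (Set.Ioi x)
  rw [hpre] at hshift
  rw [Efun, ← hshift, ← integral_const_mul]
  congr 1 with u
  rw [mul_div_assoc', ← Real.exp_add]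
  ring_nf

lemma strictAntiOn_Efun : StrictAntiOn Efun (Set.Ioi 0) := by
  intro x (hx : 0 < x) y (hy : 0 < y) hxy
  rw [Efun_eq_integral_Ioi_zero, Efun_eq_integral_Ioi_zero]
  refine setIntegral_lt_setIntegral_of_forall_lt measurableSet_Ioi (by simp)
    (integrableOn_exp_neg_div_add_Ioi (by simpa using hy))
    (integrableOn_exp_neg_div_add_Ioi (by simpa using hx)) fun u (hu : 0 < u) => ?_
  gcongr

/-- `E(x) = e^x ∫_x^∞ e^{−t}/t dt` is finite for every `x > 0` (the defining
integral is finite) and `E` is strictly monotonically decreasing on `(0, ∞)`. -/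
theorem stmt8 :
    (∀ x : ℝ, 0 < x → IntegrableOn (fun t : ℝ => Real.exp (-t) / t) (Set.Ioi x)) ∧
    (∀ x y : ℝ, 0 < x → x < y → Efun y < Efun x) :=
  ⟨fun _ hx => integrableOn_exp_neg_div_Ioi hx,
    fun _ _ hx hxy => strictAntiOn_Efun hx (hx.trans hxy) hxy⟩
end
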